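/- arXiv:1706.06058 — 2 statements merged into one kernel-verified Lean document; each statement's English description precedes it below -/
import Mathlib

section
/- Let d > 0 and s ∈ ℝ. For every multi-index α ∈ ℕⁿ and every j ∈ ℕ there exists a constant C > 0 such that for all ξ ∈ ℝⁿ and τ ∈ ℝ, |∂_ξ^α ∂_τ^j ( (⟨ξ⟩^{2d}+τ²)^{s/(2d)} )| ≤ C (⟨ξ⟩^{2d-|α|} + {ξ,τ}^{2d-|α|}) {ξ,τ}^{s-2d-dj}. In other words, the function {ξ,τ}^s satisfies the anisotropic symbol estimates of order m = s with regularity number ν = 2d. -/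
/-- Iterated directional derivative: `dLine [v₁, …, v_k] f` is
`∂_{v₁} ⋯ ∂_{v_k} f` (each derivative taken via `fderiv ℝ`). -/
noncomputable def dLine {E F : Type*} [NormedAddCommGroup E] [NormedSpace ℝ E]
    [NormedAddCommGroup F] [NormedSpace ℝ F] :
    List E → (E → F) → (E → F)
  | [], f => f
  | v :: L, f => fun x => fderiv ℝ (dLine L f) x v

/-- `⟨ξ⟩ = (1 + |ξ|²)^{1/2}`. -/
noncomputable def jap {n : ℕ} (ξ : EuclideanSpace ℝ (Fin n)) : ℝ :=
  (1 + ‖ξ‖ ^ 2) ^ ((1 : ℝ) / 2)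

/-- `{ξ,τ} = (⟨ξ⟩^{2d} + τ²)^{1/(2d)}`. -/
noncomputable def kap {n : ℕ} (d : ℝ) (ξ : EuclideanSpace ℝ (Fin n)) (τ : ℝ) : ℝ :=
  (jap ξ ^ (2 * d) + τ ^ 2) ^ (1 / (2 * d))


/-!
Every derivative `∂_ξ^α ∂_τ^j {ξ,τ}^s` is a finite sum of terms `c ξ^β τ^b ⟨ξ⟩^{2e} {ξ,τ}^{2dg}`,
and since `|ξᵢ| ≤ ⟨ξ⟩` and `|τ| ≤ {ξ,τ}^d` such a term is bounded by `|c| ⟨ξ⟩^a {ξ,τ}^m` with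
`a = |β| + 2e` and `m = d (b + 2g)`. A `ξ`-derivative lowers `a + m` by `1` and a `τ`-derivative
lowers it by `d`, so `a + m = s - dj - |α|`. Moreover either `a ≥ 2d - |α|`, or the term involves
`ξ` only through `{ξ,τ}` (and `a = 0`): a `ξ`-derivative falling on `{ξ,τ}^{2dg}` brings in the
factor `⟨ξ⟩^{2d-2} ξᵢ`, which raises `a` by `2d - 1`. As `⟨ξ⟩ ≤ {ξ,τ}`, in the first case
`⟨ξ⟩^a {ξ,τ}^m ≤ ⟨ξ⟩^{2d-|α|} {ξ,τ}^{s-2d-dj}`, and in the second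
`{ξ,τ}^m = {ξ,τ}^{2d-|α|} {ξ,τ}^{s-2d-dj}`.
-/

noncomputable section

open Finset Function

@[to_additive]
lemma Finset.prod_apply_update {ι α M : Type*} [Fintype ι] [DecidableEq ι] [CommMonoid M]
    (f : ι → α → M) (β : ι → α) (i : ι) (a : α) :
    ∏ k, f k (update β i a k) = f i a * ∏ k ∈ univ.erase i, f k (β k) := by
  rw [← sdiff_singleton_eq_erase, ← prod_update_of_mem (mem_univ i)]
  exact prod_congr rfl fun k _ => apply_update f β i a k

lemma Real.rpow_mul_rpow_le {x y a b c : ℝ} (hx : 0 < x) (hxy : x ≤ y) (hca : c ≤ a) :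
    x ^ a * y ^ b ≤ x ^ c * y ^ (a + b - c) := by
  have hy : 0 < y := hx.trans_le hxy
  calc x ^ a * y ^ b = x ^ c * x ^ (a - c) * y ^ b := by rw [← Real.rpow_add hx]; ring_nf
    _ ≤ x ^ c * y ^ (a - c) * y ^ b := by gcongr
    _ = x ^ c * y ^ (a + b - c) := by rw [mul_assoc, ← Real.rpow_add hy]; ring_nf

lemma dLine_append {E F : Type*} [NormedAddCommGroup E] [NormedSpace ℝ E]
    [NormedAddCommGroup F] [NormedSpace ℝ F] (L₁ L₂ : List E) (f : E → F) :
    dLine (L₁ ++ L₂) f = dLine L₁ (dLine L₂ f) := by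
  induction L₁ with
  | nil => rfl
  | cons v L ih => simp only [List.cons_append, dLine, ih]

variable {n : ℕ}

/-- `japSq p = ⟨ξ⟩²` and `kapPow d p = {ξ,τ}^{2d}`: the forms in which the weights are
differentiated. -/
def japSq (p : EuclideanSpace ℝ (Fin n) × ℝ) : ℝ := 1 + ‖p.1‖ ^ 2

def kapPow (d : ℝ) (p : EuclideanSpace ℝ (Fin n) × ℝ) : ℝ := japSq p ^ d + p.2 ^ 2

lemma japSq_pos (p : EuclideanSpace ℝ (Fin n) × ℝ) : 0 < japSq p := by
  unfold japSq; positivity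

lemma kapPow_pos (d : ℝ) (p : EuclideanSpace ℝ (Fin n) × ℝ) : 0 < kapPow d p := by
  have := japSq_pos p
  unfold kapPow; positivity

lemma jap_pos (ξ : EuclideanSpace ℝ (Fin n)) : 0 < jap ξ := by
  unfold jap; positivity

lemma kap_pos (d : ℝ) (ξ : EuclideanSpace ℝ (Fin n)) (τ : ℝ) : 0 < kap d ξ τ := by
  have := jap_pos ξ
  unfold kap; positivity

lemma japSq_rpow (p : EuclideanSpace ℝ (Fin n) × ℝ) (e : ℝ) :
    japSq p ^ e = jap p.1 ^ (2 * e) := by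
  rw [jap, ← Real.rpow_mul (by positivity), japSq]
  ring_nf

lemma kapPow_rpow {d : ℝ} (hd : d ≠ 0) (p : EuclideanSpace ℝ (Fin n) × ℝ) (g : ℝ) :
    kapPow d p ^ g = kap d p.1 p.2 ^ (2 * d * g) := by
  have := jap_pos p.1
  rw [kap, ← Real.rpow_mul (by positivity), kapPow, japSq_rpow]
  field_simp

lemma jap_le_kap {d : ℝ} (hd : 0 < d) (ξ : EuclideanSpace ℝ (Fin n)) (τ : ℝ) :
    jap ξ ≤ kap d ξ τ := by
  have := jap_pos ξ
  calc jap ξ = (jap ξ ^ (2 * d)) ^ (1 / (2 * d)) := by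
        rw [← Real.rpow_mul this.le]; field_simp; simp
    _ ≤ kap d ξ τ := by
        unfold kap; gcongr; linarith [sq_nonneg τ]

lemma abs_apply_le_jap (ξ : EuclideanSpace ℝ (Fin n)) (i : Fin n) : |ξ i| ≤ jap ξ := by
  rw [jap, ← Real.sqrt_eq_rpow]
  apply Real.abs_le_sqrt
  nlinarith [PiLp.norm_apply_le ξ i, norm_nonneg (ξ i), Real.norm_eq_abs (ξ i), sq_abs (ξ i)]

lemma abs_le_kap_rpow {d : ℝ} (hd : 0 < d) (ξ : EuclideanSpace ℝ (Fin n)) (τ : ℝ) :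
    |τ| ≤ kap d ξ τ ^ d := by
  have h : kap d ξ τ ^ d = kapPow d (ξ, τ) ^ (1 / 2 : ℝ) := by
    rw [kapPow_rpow hd.ne']; field_simp
  rw [h, ← Real.sqrt_eq_rpow]
  apply Real.abs_le_sqrt
  have := japSq_pos (ξ, τ)
  unfold kapPow; simp only; linarith [Real.rpow_pos_of_pos this d]

lemma abs_prod_pow_le_jap (β : Fin n → ℕ) (ξ : EuclideanSpace ℝ (Fin n)) :
    |∏ k, ξ k ^ β k| ≤ jap ξ ^ (∑ k, (β k : ℝ)) := by
  calc |∏ k, ξ k ^ β k| = ∏ k, |ξ k| ^ β k := by simp [abs_prod, abs_pow]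
    _ ≤ ∏ k, jap ξ ^ β k := by gcongr with k; exact abs_apply_le_jap ξ k
    _ = jap ξ ^ (∑ k, (β k : ℝ)) := by
      rw [prod_pow_eq_pow_sum, ← Real.rpow_natCast]; push_cast; rfl

def HasPartialsAt (f : EuclideanSpace ℝ (Fin n) × ℝ → ℝ) (fξ : Fin n → ℝ) (fτ : ℝ)
    (p : EuclideanSpace ℝ (Fin n) × ℝ) : Prop :=
  ∃ L : (EuclideanSpace ℝ (Fin n) × ℝ) →L[ℝ] ℝ, HasFDerivAt f L p ∧
    (∀ i, L (EuclideanSpace.single i 1, 0) = fξ i) ∧ L (0, 1) = fτ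

namespace HasPartialsAt

variable {f g : EuclideanSpace ℝ (Fin n) × ℝ → ℝ} {fξ gξ : Fin n → ℝ} {fτ gτ : ℝ}
  {p : EuclideanSpace ℝ (Fin n) × ℝ}

lemma fderiv_xi (hf : HasPartialsAt f fξ fτ p) (i : Fin n) :
    fderiv ℝ f p (EuclideanSpace.single i 1, 0) = fξ i := by
  obtain ⟨L, hL, hξ, -⟩ := hf
  rw [hL.fderiv, hξ]

lemma fderiv_tau (hf : HasPartialsAt f fξ fτ p) : fderiv ℝ f p (0, 1) = fτ := by
  obtain ⟨L, hL, -, hτ⟩ := hf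
  rw [hL.fderiv, hτ]

lemma congr_partials (hf : HasPartialsAt f fξ fτ p) (hξ : ∀ i, fξ i = gξ i) (hτ : fτ = gτ) :
    HasPartialsAt f gξ gτ p := by
  obtain ⟨L, hL, hLξ, hLτ⟩ := hf
  exact ⟨L, hL, fun i => (hLξ i).trans (hξ i), hLτ.trans hτ⟩

lemma add (hf : HasPartialsAt f fξ fτ p) (hg : HasPartialsAt g gξ gτ p) :
    HasPartialsAt (fun q => f q + g q) (fun i => fξ i + gξ i) (fτ + gτ) p := by
  obtain ⟨L, hL, hLξ, hLτ⟩ := hf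
  obtain ⟨M, hM, hMξ, hMτ⟩ := hg
  exact ⟨L + M, hL.add hM, fun i => by simp [hLξ, hMξ], by simp [hLτ, hMτ]⟩

lemma mul (hf : HasPartialsAt f fξ fτ p) (hg : HasPartialsAt g gξ gτ p) :
    HasPartialsAt (fun q => f q * g q) (fun i => fξ i * g p + f p * gξ i)
      (fτ * g p + f p * gτ) p := by
  obtain ⟨L, hL, hLξ, hLτ⟩ := hf
  obtain ⟨M, hM, hMξ, hMτ⟩ := hg
  refine ⟨_, hL.fun_mul hM, fun i => ?_, ?_⟩ <;> simp [hLξ, hMξ, hLτ, hMτ] <;> ring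

lemma const_mul (hf : HasPartialsAt f fξ fτ p) (c : ℝ) :
    HasPartialsAt (fun q => c * f q) (fun i => c * fξ i) (c * fτ) p := by
  obtain ⟨L, hL, hLξ, hLτ⟩ := hf
  exact ⟨c • L, hL.const_mul c, fun i => by simp [hLξ], by simp [hLτ]⟩

lemma pow (hf : HasPartialsAt f fξ fτ p) (m : ℕ) :
    HasPartialsAt (fun q => f q ^ m) (fun i => m * f p ^ (m - 1) * fξ i)
      (m * f p ^ (m - 1) * fτ) p := by
  obtain ⟨L, hL, hLξ, hLτ⟩ := hf
  refine ⟨_, hL.pow m, fun i => ?_, ?_⟩ <;> simp [hLξ, hLτ, mul_assoc]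

lemma rpow_const (hf : HasPartialsAt f fξ fτ p) (hp : 0 < f p) (e : ℝ) :
    HasPartialsAt (fun q => f q ^ e) (fun i => e * f p ^ (e - 1) * fξ i)
      (e * f p ^ (e - 1) * fτ) p := by
  obtain ⟨L, hL, hLξ, hLτ⟩ := hf
  refine ⟨_, hL.rpow_const (Or.inl hp.ne'), fun i => ?_, ?_⟩ <;> simp [hLξ, hLτ, mul_assoc]

end HasPartialsAt

lemma hasPartialsAt_snd (p : EuclideanSpace ℝ (Fin n) × ℝ) :
    HasPartialsAt (fun q => q.2) 0 1 p :=
  ⟨_, hasFDerivAt_snd, fun i => by simp, by simp⟩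

lemma hasPartialsAt_japSq (p : EuclideanSpace ℝ (Fin n) × ℝ) :
    HasPartialsAt japSq (fun i => 2 * p.1 i) 0 p :=
  ⟨_, hasFDerivAt_fst.norm_sq.const_add 1, fun i => by simp [EuclideanSpace.inner_single_right],
    by simp⟩

lemma hasPartialsAt_kapPow (d : ℝ) (p : EuclideanSpace ℝ (Fin n) × ℝ) :
    HasPartialsAt (kapPow d) (fun i => 2 * d * japSq p ^ (d - 1) * p.1 i) (2 * p.2) p := by
  refine (((hasPartialsAt_japSq p).rpow_const (japSq_pos p) d).add
    ((hasPartialsAt_snd p).pow 2)).congr_partials (fun i => ?_) ?_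
  · simp only [Pi.zero_apply, mul_zero, add_zero]; ring
  · simp

lemma hasPartialsAt_monomial (β : Fin n → ℕ) (p : EuclideanSpace ℝ (Fin n) × ℝ) :
    HasPartialsAt (fun q => ∏ k, q.1 k ^ β k)
      (fun i => β i * ∏ k, p.1 k ^ update β i (β i - 1) k) 0 p := by
  have hcoord (k : Fin n) : HasFDerivAt (fun q : EuclideanSpace ℝ (Fin n) × ℝ => q.1 k)
      ((EuclideanSpace.proj k).comp (ContinuousLinearMap.fst ℝ _ ℝ)) p :=
    ((EuclideanSpace.proj k).comp (ContinuousLinearMap.fst ℝ _ ℝ)).hasFDerivAt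
  refine ⟨_, HasFDerivAt.finsetProd fun k _ => (hcoord k).pow (β k), fun i => ?_, by simp⟩
  simp [prod_apply_update (fun k (m : ℕ) => p.1 k ^ m), mul_comm, mul_assoc]

/-- `⟨c, β, b, e, g⟩ : Term n` stands for the function `c ξ^β τ^b ⟨ξ⟩^{2e} {ξ,τ}^{2dg}`. -/
structure Term (n : ℕ) where
  c : ℝ
  β : Fin n → ℕ
  b : ℕ
  e : ℝ
  g : ℝ

namespace Term

def eval (d : ℝ) (T : Term n) (p : EuclideanSpace ℝ (Fin n) × ℝ) : ℝ :=
  T.c * (∏ k, p.1 k ^ T.β k) * p.2 ^ T.b * japSq p ^ T.e * kapPow d p ^ T.g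

def derivXi (d : ℝ) (T : Term n) (i : Fin n) : List (Term n) :=
  [⟨T.c * T.β i, update T.β i (T.β i - 1), T.b, T.e, T.g⟩,
   ⟨2 * T.c * T.e, update T.β i (T.β i + 1), T.b, T.e - 1, T.g⟩,
   ⟨2 * d * T.c * T.g, update T.β i (T.β i + 1), T.b, T.e + d - 1, T.g - 1⟩]

def derivTau (T : Term n) : List (Term n) :=
  [⟨T.c * T.b, T.β, T.b - 1, T.e, T.g⟩,
   ⟨2 * T.c * T.g, T.β, T.b + 1, T.e, T.g - 1⟩]

end Term

def derivXiList (d : ℝ) (i : Fin n) (L : List (Term n)) : List (Term n) :=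
  L.flatMap (·.derivXi d i)

def derivTauList (L : List (Term n)) : List (Term n) :=
  L.flatMap Term.derivTau

def evalSum (d : ℝ) (L : List (Term n)) (p : EuclideanSpace ℝ (Fin n) × ℝ) : ℝ :=
  (L.map fun T => T.eval d p).sum

lemma evalSum_cons (d : ℝ) (T : Term n) (L : List (Term n)) :
    evalSum d (T :: L) = fun p => T.eval d p + evalSum d L p := rfl

lemma evalSum_append (d : ℝ) (L₁ L₂ : List (Term n)) (p : EuclideanSpace ℝ (Fin n) × ℝ) :
    evalSum d (L₁ ++ L₂) p = evalSum d L₁ p + evalSum d L₂ p := by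
  simp [evalSum]

lemma Term.hasPartialsAt_eval (d : ℝ) (T : Term n) (p : EuclideanSpace ℝ (Fin n) × ℝ) :
    HasPartialsAt (T.eval d) (fun i => evalSum d (T.derivXi d i) p)
      (evalSum d T.derivTau p) p := by
  have hu := japSq_pos p
  have h := (((((hasPartialsAt_monomial T.β p).const_mul T.c).mul
    ((hasPartialsAt_snd p).pow T.b)).mul ((hasPartialsAt_japSq p).rpow_const hu T.e)).mul
    ((hasPartialsAt_kapPow d p).rpow_const (kapPow_pos d p) T.g))
  refine h.congr_partials (fun i => ?_) ?_
  · have hβ : ∏ k, p.1 k ^ T.β k = p.1 i ^ T.β i * ∏ k ∈ univ.erase i, p.1 k ^ T.β k :=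
      (mul_prod_erase univ _ (mem_univ i)).symm
    have he : japSq p ^ (T.e + d - 1) = japSq p ^ T.e * japSq p ^ (d - 1) := by
      rw [← Real.rpow_add hu, add_sub_assoc]
    simp only [evalSum, derivXi, eval, List.map_cons, List.map_nil, List.sum_cons, List.sum_nil,
      prod_apply_update (fun k (m : ℕ) => p.1 k ^ m), hβ, he, pow_succ, Pi.zero_apply,
      mul_zero, add_zero]
    ring
  · simp only [evalSum, derivTau, eval, List.map_cons, List.map_nil, List.sum_cons, List.sum_nil,
      pow_succ, mul_zero, zero_mul, mul_one, zero_add, add_zero]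
    ring

lemma hasPartialsAt_evalSum (d : ℝ) (L : List (Term n)) (p : EuclideanSpace ℝ (Fin n) × ℝ) :
    HasPartialsAt (evalSum d L) (fun i => evalSum d (derivXiList d i L) p)
      (evalSum d (derivTauList L) p) p := by
  induction L with
  | nil => exact ⟨0, hasFDerivAt_const 0 p, fun i => rfl, rfl⟩
  | cons T L ih =>
    rw [evalSum_cons]
    refine ((T.hasPartialsAt_eval d p).add ih).congr_partials (fun i => ?_) ?_
    · simp [derivXiList, evalSum_append]
    · simp [derivTauList, evalSum_append]

lemma dLine_replicate_evalSum (d : ℝ) (L : List (Term n)) (m : ℕ) :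
    dLine (List.replicate m ((0 : EuclideanSpace ℝ (Fin n)), (1 : ℝ))) (evalSum d L) =
      evalSum d (derivTauList^[m] L) := by
  induction m with
  | zero => rfl
  | succ m ih =>
    rw [List.replicate_succ, dLine, ih, iterate_succ_apply']
    exact funext fun p => (hasPartialsAt_evalSum d _ p).fderiv_tau

lemma dLine_map_single_evalSum (d : ℝ) (L : List (Term n)) (A : List (Fin n)) :
    dLine (A.map fun i => ((EuclideanSpace.single i 1 : EuclideanSpace ℝ (Fin n)), (0 : ℝ)))
      (evalSum d L) = evalSum d (A.foldr (derivXiList d) L) := by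
  induction A with
  | nil => rfl
  | cons i A ih =>
    rw [List.map_cons, dLine, ih, List.foldr_cons]
    exact funext fun p => (hasPartialsAt_evalSum d _ p).fderiv_xi i

def kapRpowTerm (d s : ℝ) : Term n := ⟨1, 0, 0, 0, s / (2 * d)⟩

lemma kap_rpow_eq_evalSum {d : ℝ} (hd : d ≠ 0) (s : ℝ) :
    (fun p : EuclideanSpace ℝ (Fin n) × ℝ => kap d p.1 p.2 ^ s) =
      evalSum d [kapRpowTerm d s] := by
  ext p
  simp [evalSum, kapRpowTerm, Term.eval, kapPow_rpow hd,
    mul_div_cancel₀ s (mul_ne_zero two_ne_zero hd)]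

def symbolWeight (d s : ℝ) (k j : ℕ) (ξ : EuclideanSpace ℝ (Fin n)) (τ : ℝ) : ℝ :=
  (jap ξ ^ (2 * d - k) + kap d ξ τ ^ (2 * d - k)) * kap d ξ τ ^ (s - 2 * d - d * j)

lemma symbolWeight_nonneg (d s : ℝ) (k j : ℕ) (ξ : EuclideanSpace ℝ (Fin n)) (τ : ℝ) :
    0 ≤ symbolWeight d s k j ξ τ := by
  have := jap_pos ξ
  have := kap_pos d ξ τ
  unfold symbolWeight; positivity

namespace Term

def xiOrder (T : Term n) : ℝ := ∑ k, (T.β k : ℝ) + 2 * T.e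

def kapOrder (d : ℝ) (T : Term n) : ℝ := d * (T.b + 2 * T.g)

/-- The invariant of the terms of `∂_ξ^α ∂_τ^j {ξ,τ}^s` with `|α| = k`. -/
def Admissible (d s : ℝ) (k j : ℕ) (T : Term n) : Prop :=
  T.c ≠ 0 → T.xiOrder + T.kapOrder d = s - d * j - k ∧
    (2 * d - k ≤ T.xiOrder ∨ T.β = 0 ∧ T.e = 0)

lemma abs_eval_le {d : ℝ} (hd : 0 < d) (T : Term n) (p : EuclideanSpace ℝ (Fin n) × ℝ) :
    |T.eval d p| ≤ |T.c| * (jap p.1 ^ T.xiOrder * kap d p.1 p.2 ^ T.kapOrder d) := by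
  have hτ : |p.2| ^ T.b ≤ kap d p.1 p.2 ^ (d * T.b) := by
    rw [Real.rpow_mul_natCast (kap_pos d p.1 p.2).le]
    gcongr
    exact abs_le_kap_rpow hd p.1 p.2
  have := jap_pos p.1
  have := kap_pos d p.1 p.2
  calc |T.eval d p|
      = |T.c| * |∏ k, p.1 k ^ T.β k| * |p.2| ^ T.b *
        jap p.1 ^ (2 * T.e) * kap d p.1 p.2 ^ (2 * d * T.g) := by
        rw [eval, japSq_rpow, kapPow_rpow hd.ne']
        simp [abs_mul, abs_pow, abs_of_pos (Real.rpow_pos_of_pos _ _), *]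
    _ ≤ |T.c| * jap p.1 ^ (∑ k, (T.β k : ℝ)) * kap d p.1 p.2 ^ (d * T.b) *
        jap p.1 ^ (2 * T.e) * kap d p.1 p.2 ^ (2 * d * T.g) := by
      gcongr
      exact abs_prod_pow_le_jap T.β p.1
    _ = |T.c| * (jap p.1 ^ T.xiOrder * kap d p.1 p.2 ^ T.kapOrder d) := by
      rw [xiOrder, kapOrder, mul_add, show d * (2 * T.g) = 2 * d * T.g by ring,
        Real.rpow_add (jap_pos p.1), Real.rpow_add (kap_pos d p.1 p.2)]
      ring

lemma Admissible.abs_eval_le {d s : ℝ} (hd : 0 < d) {k j : ℕ} {T : Term n}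
    (hT : T.Admissible d s k j) (p : EuclideanSpace ℝ (Fin n) × ℝ) :
    |T.eval d p| ≤ |T.c| * symbolWeight d s k j p.1 p.2 := by
  by_cases hc : T.c = 0
  · simp [eval, hc]
  obtain ⟨hsum, hord⟩ := hT hc
  refine (T.abs_eval_le hd p).trans (mul_le_mul_of_nonneg_left ?_ (abs_nonneg _))
  have := jap_pos p.1
  have hkap := kap_pos d p.1 p.2
  rcases hord with hge | ⟨hβ, he⟩
  · calc jap p.1 ^ T.xiOrder * kap d p.1 p.2 ^ T.kapOrder d
        ≤ jap p.1 ^ (2 * d - k) * kap d p.1 p.2 ^ (T.xiOrder + T.kapOrder d - (2 * d - k)) :=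
          Real.rpow_mul_rpow_le (jap_pos _) (jap_le_kap hd _ _) hge
      _ = jap p.1 ^ (2 * d - k) * kap d p.1 p.2 ^ (s - 2 * d - d * j) := by rw [hsum]; ring_nf
      _ ≤ symbolWeight d s k j p.1 p.2 := by
          unfold symbolWeight; gcongr; exact le_add_of_nonneg_right (by positivity)
  · have hX : T.xiOrder = 0 := by simp [xiOrder, hβ, he]
    calc jap p.1 ^ T.xiOrder * kap d p.1 p.2 ^ T.kapOrder d
        = kap d p.1 p.2 ^ (2 * d - k) * kap d p.1 p.2 ^ (s - 2 * d - d * j) := by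
          rw [hX, Real.rpow_zero, one_mul, ← Real.rpow_add hkap]; congr 1; linarith
      _ ≤ symbolWeight d s k j p.1 p.2 := by
          unfold symbolWeight; gcongr; exact le_add_of_nonneg_left (by positivity)

lemma Admissible.derivXi {d s : ℝ} (hd : 0 ≤ d) {k j : ℕ} {T : Term n}
    (hT : T.Admissible d s k j) (i : Fin n) :
    ∀ T' ∈ T.derivXi d i, T'.Admissible d s (k + 1) j := by
  have hS (m : ℕ) : ∑ l, (update T.β i m l : ℝ) = ∑ l, (T.β l : ℝ) + m - T.β i := by
    rw [sum_apply_update (fun _ (m : ℕ) => (m : ℝ)), ← add_sum_erase _ _ (mem_univ i)]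
    ring
  simp only [Term.derivXi, List.mem_cons, List.not_mem_nil, or_false]
  rintro T' (rfl | rfl | rfl) hc
  · obtain ⟨hc, hβi⟩ := mul_ne_zero_iff.mp hc
    obtain ⟨hsum, hord⟩ := hT hc
    have hβ : 1 ≤ T.β i := Nat.one_le_iff_ne_zero.mpr (by exact_mod_cast hβi)
    have hge : 2 * d - k ≤ T.xiOrder := hord.resolve_right fun h => hβi (by simp [h.1])
    simp only [xiOrder, kapOrder, hS, Nat.cast_sub hβ] at hsum hge ⊢
    push_cast
    exact ⟨by linarith, Or.inl (by linarith)⟩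
  · obtain ⟨h2c, he⟩ := mul_ne_zero_iff.mp hc
    obtain ⟨hsum, hord⟩ := hT (right_ne_zero_of_mul h2c)
    have hge : 2 * d - k ≤ T.xiOrder := hord.resolve_right fun h => he h.2
    simp only [xiOrder, kapOrder, hS] at hsum hge ⊢
    push_cast
    exact ⟨by linarith, Or.inl (by linarith)⟩
  · obtain ⟨hsum, hord⟩ := hT (right_ne_zero_of_mul (left_ne_zero_of_mul hc))
    have hX : -(k : ℝ) ≤ T.xiOrder := by
      rcases hord with h | h
      · linarith
      · simp [xiOrder, h.1, h.2]
    simp only [xiOrder, kapOrder, hS] at hsum hX ⊢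
    push_cast
    exact ⟨by linarith, Or.inl (by linarith)⟩

lemma Admissible.derivTau {d s : ℝ} {k j : ℕ} {T : Term n} (hT : T.Admissible d s k j) :
    ∀ T' ∈ T.derivTau, T'.Admissible d s k (j + 1) := by
  simp only [Term.derivTau, List.mem_cons, List.not_mem_nil, or_false]
  have hj : s - d * ↑(j + 1) = s - d * j - d := by push_cast; ring
  rintro T' (rfl | rfl) hc
  · obtain ⟨hc, hb0⟩ := mul_ne_zero_iff.mp hc
    obtain ⟨hsum, hord⟩ := hT hc
    have hb : 1 ≤ T.b := Nat.one_le_iff_ne_zero.mpr (by exact_mod_cast hb0)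
    refine ⟨?_, hord⟩
    simp only [xiOrder, kapOrder, Nat.cast_sub hb, hj] at hsum ⊢
    push_cast
    linarith
  · obtain ⟨hsum, hord⟩ := hT (right_ne_zero_of_mul (left_ne_zero_of_mul hc))
    refine ⟨?_, hord⟩
    simp only [xiOrder, kapOrder, hj] at hsum ⊢
    push_cast
    linarith

end Term

lemma abs_evalSum_le {d s : ℝ} (hd : 0 < d) {k j : ℕ} {L : List (Term n)}
    (hL : ∀ T ∈ L, T.Admissible d s k j) (p : EuclideanSpace ℝ (Fin n) × ℝ) :
    |evalSum d L p| ≤ (L.map fun T => |T.c|).sum * symbolWeight d s k j p.1 p.2 := by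
  induction L with
  | nil => simp [evalSum]
  | cons T L ih =>
    rw [evalSum_cons, List.map_cons, List.sum_cons, add_mul]
    exact (abs_add_le _ _).trans (add_le_add ((hL T (by simp)).abs_eval_le hd p)
      (ih fun T' hT' => hL T' (by simp [hT'])))

lemma admissible_foldr_derivXiList {d s : ℝ} (hd : 0 ≤ d) {k j : ℕ} {L : List (Term n)}
    (hL : ∀ T ∈ L, T.Admissible d s k j) (A : List (Fin n)) :
    ∀ T ∈ A.foldr (derivXiList d) L, T.Admissible d s (k + A.length) j := by
  induction A with
  | nil => simpa using hL
  | cons i A ih =>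
    intro T hT
    obtain ⟨T', hT', hT⟩ := List.mem_flatMap.mp hT
    simpa [← add_assoc] using (ih T' hT').derivXi hd i T hT

lemma admissible_iterate_derivTauList {d s : ℝ} {k j : ℕ} {L : List (Term n)}
    (hL : ∀ T ∈ L, T.Admissible d s k j) (m : ℕ) :
    ∀ T ∈ derivTauList^[m] L, T.Admissible d s k (j + m) := by
  induction m with
  | zero => simpa using hL
  | succ m ih =>
    intro T hT
    rw [iterate_succ_apply'] at hT
    obtain ⟨T', hT', hT⟩ := List.mem_flatMap.mp hT
    simpa [← add_assoc] using (ih T' hT').derivTau T hT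

lemma admissible_kapRpowTerm {d : ℝ} (hd : d ≠ 0) (s : ℝ) :
    (kapRpowTerm d s : Term n).Admissible d s 0 0 := by
  intro _
  refine ⟨?_, Or.inr ⟨rfl, rfl⟩⟩
  simp only [Term.xiOrder, Term.kapOrder, kapRpowTerm, Pi.zero_apply, CharP.cast_eq_zero,
    sum_const_zero]
  field_simp
  ring

end

/-- The multi-index `α` is encoded as the list `A` of coordinate directions (so `|α| = A.length`),
and `j` is the number of `τ`-derivatives. -/
theorem stmt_0 {n : ℕ} (d s : ℝ) (hd : 0 < d) (A : List (Fin n)) (j : ℕ) :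
    ∃ C : ℝ, 0 < C ∧ ∀ (ξ : EuclideanSpace ℝ (Fin n)) (τ : ℝ),
      |dLine
          (A.map (fun i => ((EuclideanSpace.single i 1 : EuclideanSpace ℝ (Fin n)), (0 : ℝ)))
            ++ List.replicate j ((0 : EuclideanSpace ℝ (Fin n)), (1 : ℝ)))
          (fun p : EuclideanSpace ℝ (Fin n) × ℝ => kap d p.1 p.2 ^ s) (ξ, τ)|
        ≤ C * ((jap ξ ^ (2 * d - (A.length : ℝ)) + kap d ξ τ ^ (2 * d - (A.length : ℝ)))
            * kap d ξ τ ^ (s - 2 * d - d * (j : ℝ))) := by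
  set L := A.foldr (derivXiList d) (derivTauList^[j] [kapRpowTerm d s])
  have hL : ∀ T ∈ L, T.Admissible d s A.length j := by
    have h0 := List.forall_mem_singleton.mpr (admissible_kapRpowTerm (n := n) hd.ne' s)
    simpa using admissible_foldr_derivXiList hd.le (admissible_iterate_derivTauList h0 j) A
  have hC : 0 ≤ (L.map fun T => |T.c|).sum := List.sum_nonneg (by simp)
  refine ⟨(L.map fun T => |T.c|).sum + 1, by positivity, fun ξ τ => ?_⟩
  rw [dLine_append, kap_rpow_eq_evalSum hd.ne', dLine_replicate_evalSum, dLine_map_single_evalSum]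
  exact (abs_evalSum_le hd hL (ξ, τ)).trans
    (mul_le_mul_of_nonneg_right (le_add_of_nonneg_right zero_le_one) (symbolWeight_nonneg ..))
end

section
/- Let n ≥ 1, 0 < a < 1, let Ω ⊂ ℝⁿ be a bounded measurable set, and let k : S^{n-1} → ℝ be measurable with k(θ) ≥ k₀ > 0 for all θ ∈ S^{n-1}. Then there exists c > 0 such that for every u ∈ L²(ℝⁿ, ℝ) with u = 0 almost everywhere outside Ω, ½ ∫∫_{ℝⁿ×ℝⁿ} |u(x) − u(y)|² k((x−y)/|x−y|) |x−y|^{-n-2a} dx dy ≥ c ∫_{ℝⁿ} |u(x)|² dx (where the left-hand side may be +∞). This fractional Poincaré inequality gives the positive lower bound of the Dirichlet form Q used to make the Dirichlet realization P_{Dir,2} bijective. -/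
/-!
Choose a ball `Y` disjoint from `Ω` at distance comparable to the size of `Ω`. For `x ∈ Ω` and
`y ∈ Y` we have `u y = 0`, and `|x - y|` lies in a fixed range `[r, 5r]` on which
`k((x - y)/|x - y|) |x - y|^{-n-2a}` is bounded below by a constant `κ > 0`. Restricting the
double integral to `ℝⁿ × Y` therefore gives `∫∫ ≥ κ · |Y| · ∫ u²`.
-/

open MeasureTheory Metric

open scoped ENNReal

theorem lintegral_mul_measure_le_lintegral_prod {α β : Type*} [MeasurableSpace α]
    [MeasurableSpace β] {μ : Measure α} {ν : Measure β} [SFinite ν]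
    {f : α → ℝ≥0∞} {F : α × β → ℝ≥0∞} {t : Set β} {C : ℝ≥0∞}
    (hf : AEMeasurable f μ) (ht : MeasurableSet t)
    (hF : ∀ᵐ q ∂μ.prod ν, q.2 ∈ t → f q.1 * C ≤ F q) :
    (∫⁻ x, f x ∂μ) * (C * ν t) ≤ ∫⁻ q, F q ∂μ.prod ν := by
  calc (∫⁻ x, f x ∂μ) * (C * ν t)
      = ∫⁻ q, f q.1 * t.indicator (fun _ => C) q.2 ∂μ.prod ν := by
        rw [lintegral_prod_mul hf ((measurable_const.indicator ht).aemeasurable),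
          lintegral_indicator_const ht]
    _ ≤ ∫⁻ q, F q ∂μ.prod ν := by
        refine lintegral_mono_ae (hF.mono fun q hq => ?_)
        by_cases hqt : q.2 ∈ t
        · simpa [hqt] using hq hqt
        · simp [hqt]

theorem exists_ball_norm_sub_mem_Icc_of_isBounded {E : Type*} [NormedAddCommGroup E]
    [NormedSpace ℝ E] [Nontrivial E] {Ω : Set E} (hΩ : Bornology.IsBounded Ω) :
    ∃ r > 0, ∃ p : E, ∀ x ∈ Ω, ∀ y ∈ ball p r, ‖x - y‖ ∈ Set.Icc r (5 * r) := by
  obtain ⟨R, hR⟩ := hΩ.subset_closedBall 0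
  set r := max R 1
  obtain ⟨p, hp⟩ := exists_norm_eq E (by positivity : (0 : ℝ) ≤ 3 * r)
  refine ⟨r, by positivity, p, fun x hx y hy => ?_⟩
  have hxr : ‖x‖ ≤ r := (mem_closedBall_zero_iff.mp (hR hx)).trans (le_max_left _ _)
  have hyp : ‖y - p‖ < r := by simpa [dist_eq_norm] using hy
  have h₁ := norm_sub_norm_le p y
  have h₂ := norm_sub_norm_le y x
  have h₃ := norm_sub_le x y
  have h₄ := norm_sub_norm_le y p
  rw [norm_sub_rev p y] at h₁
  rw [norm_sub_rev y x] at h₂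
  constructor <;> linarith

theorem min_rpow_le_rpow_of_mem_Icc {r R t s : ℝ} (hr : 0 < r) (hrt : r ≤ t) (htR : t ≤ R) :
    min (r ^ s) (R ^ s) ≤ t ^ s := by
  rcases le_total 0 s with hs | hs
  · exact (min_le_left _ _).trans (Real.rpow_le_rpow hr.le hrt hs)
  · exact (min_le_right _ _).trans (Real.rpow_le_rpow_of_nonpos (hr.trans_le hrt) htR hs)

theorem mul_min_rpow_le_kernel {E : Type*} [NormedAddCommGroup E] [NormedSpace ℝ E]
    {k : E → ℝ} {k₀ r R s : ℝ} (hk₀ : 0 ≤ k₀) (hkl : ∀ θ : E, ‖θ‖ = 1 → k₀ ≤ k θ)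
    (hr : 0 < r) {v : E} (hrv : r ≤ ‖v‖) (hvR : ‖v‖ ≤ R) :
    k₀ * min (r ^ s) (R ^ s) ≤ k (‖v‖⁻¹ • v) * ‖v‖ ^ s := by
  have hv : 0 < ‖v‖ := hr.trans_le hrv
  have hunit : ‖‖v‖⁻¹ • v‖ = 1 := by
    rw [norm_smul, norm_inv, norm_norm, inv_mul_cancel₀ hv.ne']
  exact mul_le_mul (hkl _ hunit) (min_rpow_le_rpow_of_mem_Icc hr hrv hvR)
    (le_min (Real.rpow_nonneg hr.le _) (Real.rpow_nonneg (by linarith) _))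
    (hk₀.trans (hkl _ hunit))

theorem stmt_16_general {n : ℕ} (hn : 1 ≤ n) (a : ℝ)
    (Ω : Set (EuclideanSpace ℝ (Fin n))) (hΩb : Bornology.IsBounded Ω)
    (k : EuclideanSpace ℝ (Fin n) → ℝ)
    (k₀ : ℝ) (hk₀ : 0 < k₀) (hkl : ∀ θ : EuclideanSpace ℝ (Fin n), ‖θ‖ = 1 → k₀ ≤ k θ) :
    ∃ c : ℝ, 0 < c ∧ ∀ u : EuclideanSpace ℝ (Fin n) → ℝ,
      MemLp u 2 volume → (∀ᵐ x, x ∉ Ω → u x = 0) →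
        ENNReal.ofReal c * ∫⁻ x : EuclideanSpace ℝ (Fin n), ENNReal.ofReal (u x ^ 2)
          ≤ ENNReal.ofReal (1 / 2) *
              ∫⁻ q : EuclideanSpace ℝ (Fin n) × EuclideanSpace ℝ (Fin n),
                ENNReal.ofReal (|u q.1 - u q.2| ^ 2 *
                  (k (‖q.1 - q.2‖⁻¹ • (q.1 - q.2)) * ‖q.1 - q.2‖ ^ (-(n : ℝ) - 2 * a))) := by
  have : Nonempty (Fin n) := ⟨⟨0, hn⟩⟩
  obtain ⟨r, hr, p, hdist⟩ := exists_ball_norm_sub_mem_Icc_of_isBounded hΩb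
  set s := -(n : ℝ) - 2 * a
  set κ := k₀ * min (r ^ s) ((5 * r) ^ s)
  have hκ : 0 < κ := mul_pos hk₀ (lt_min (by positivity) (by positivity))
  have hY : volume (ball p r) ≠ ⊤ := measure_ball_lt_top.ne
  have hYpos : 0 < volume.real (ball p r) := ENNReal.toReal_pos (measure_ball_pos volume p hr).ne' hY
  refine ⟨1 / 2 * (κ * volume.real (ball p r)), by positivity, fun u hu hu0 => ?_⟩
  have hu2 : AEMeasurable (fun x => ENNReal.ofReal (u x ^ 2)) volume :=
    ENNReal.measurable_ofReal.comp_aemeasurable (hu.aestronglyMeasurable.aemeasurable.pow_const 2)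
  rw [Measure.volume_eq_prod]
  have hbound : ∀ᵐ q ∂(volume.prod volume), q.2 ∈ ball p r →
      ENNReal.ofReal (u q.1 ^ 2) * ENNReal.ofReal κ ≤ ENNReal.ofReal (|u q.1 - u q.2| ^ 2 *
        (k (‖q.1 - q.2‖⁻¹ • (q.1 - q.2)) * ‖q.1 - q.2‖ ^ s)) := by
    filter_upwards [Measure.quasiMeasurePreserving_fst.ae hu0,
      Measure.quasiMeasurePreserving_snd.ae hu0] with q hu₁ hu₂ hq₂
    by_cases hq₁ : q.1 ∈ Ω
    · obtain ⟨hrq, hqr⟩ := hdist _ hq₁ _ hq₂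
      have hq₂Ω : q.2 ∉ Ω := fun h => by
        have := (hdist _ h _ hq₂).1
        rw [sub_self, norm_zero] at this
        linarith
      rw [← ENNReal.ofReal_mul (sq_nonneg _), hu₂ hq₂Ω, sub_zero, sq_abs]
      exact ENNReal.ofReal_le_ofReal (mul_le_mul_of_nonneg_left
        (mul_min_rpow_le_kernel hk₀.le hkl hr hrq hqr) (sq_nonneg _))
    · simp [hu₁ hq₁]
  calc ENNReal.ofReal (1 / 2 * (κ * volume.real (ball p r))) * ∫⁻ x, ENNReal.ofReal (u x ^ 2)
      = ENNReal.ofReal (1 / 2) * ((∫⁻ x, ENNReal.ofReal (u x ^ 2)) *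
          (ENNReal.ofReal κ * volume (ball p r))) := by
        rw [ENNReal.ofReal_mul (by norm_num), ENNReal.ofReal_mul hκ.le, ofReal_measureReal hY]
        ring
    _ ≤ _ := by
        gcongr
        exact lintegral_mul_measure_le_lintegral_prod hu2 measurableSet_ball hbound

/-- Fractional Poincaré inequality: for `Ω ⊂ ℝⁿ` bounded measurable and
`k ≥ k₀ > 0` on the unit sphere, there is `c > 0` such that every `u ∈ L²(ℝⁿ,ℝ)`
vanishing a.e. outside `Ω` satisfies
`½ ∫∫ |u(x)−u(y)|² k((x−y)/|x−y|)|x−y|^{-n-2a} dx dy ≥ c ∫ |u|²`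
(the left-hand side may be `+∞`). -/
theorem stmt_16 {n : ℕ} (hn : 1 ≤ n) (a : ℝ) (ha0 : 0 < a) (ha1 : a < 1)
    (Ω : Set (EuclideanSpace ℝ (Fin n))) (hΩb : Bornology.IsBounded Ω)
    (hΩm : MeasurableSet Ω)
    (k : EuclideanSpace ℝ (Fin n) → ℝ) (hk : Measurable k)
    (k₀ : ℝ) (hk₀ : 0 < k₀) (hkl : ∀ θ : EuclideanSpace ℝ (Fin n), ‖θ‖ = 1 → k₀ ≤ k θ) :
    ∃ c : ℝ, 0 < c ∧ ∀ u : EuclideanSpace ℝ (Fin n) → ℝ,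
      MemLp u 2 volume → (∀ᵐ x, x ∉ Ω → u x = 0) →
        ENNReal.ofReal c * ∫⁻ x : EuclideanSpace ℝ (Fin n), ENNReal.ofReal (u x ^ 2)
          ≤ ENNReal.ofReal (1 / 2) *
              ∫⁻ q : EuclideanSpace ℝ (Fin n) × EuclideanSpace ℝ (Fin n),
                ENNReal.ofReal (|u q.1 - u q.2| ^ 2 *
                  (k (‖q.1 - q.2‖⁻¹ • (q.1 - q.2)) * ‖q.1 - q.2‖ ^ (-(n : ℝ) - 2 * a))) :=
  stmt_16_general hn a Ω hΩb k k₀ hk₀ hkl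
end
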